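/- arXiv:2406.04102 — 2 statements merged into one kernel-verified Lean document; each statement's English description precedes it below -/
import Mathlib

section
/- For every ε > 0 there exists a finite set A ⊆ ℝ² with at least 4 points such that for every partition A = B ⊔ C into two nonempty parts, MST(B) + MST(C) ≤ (1 + ε) · MST(A). (The infimum over all finite sets of the maximum MST-ratio over bipartitions is 1.) -/
open scoped Classical

noncomputable section

/-- Points of the Euclidean plane. -/
abbrev Pt := EuclideanSpace ℝ (Fin 2)

/-- The total Euclidean edge length of a graph on the points of `S`. -/
noncomputable def treeCost (S : Finset Pt) (T : SimpleGraph S) : ℝ :=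
  ∑ e ∈ Finset.univ.filter (· ∈ T.edgeSet),
    Sym2.lift ⟨fun (a b : S) => dist (a : Pt) (b : Pt), fun a b => dist_comm (a : Pt) (b : Pt)⟩ e

/-- The length of a Euclidean minimum spanning tree of the finite point set `S`:
the infimum over all spanning trees (connected acyclic graphs on the points of `S`)
of the total Euclidean edge length.  (By convention this is `0` for sets with at
most one point, since `sInf ∅ = 0`.) -/
noncomputable def mst (S : Finset Pt) : ℝ :=
  sInf { L : ℝ | ∃ T : SimpleGraph S, T.Connected ∧ T.IsAcyclic ∧ L = treeCost S T }

/-!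
Put one point at the origin and three points in `[1, 1 + 2δ]` on the `x`-axis. Any spanning
tree contains a path from the origin to `(1, 0)`, so `MST(A) ≥ 1`. In a bipartition, each part
is spanned by a star centred at one of its cluster points (or is the lone origin); the far point
is then joined by an edge of length `≤ 1 + 2δ` in only one of the parts, and each of the other
three points by an edge of length `≤ 2δ`, so `MST(B) + MST(C) ≤ 1 + 8δ`.
-/

open Finset
open SimpleGraph (starGraph starGraph_adj connected_starGraph isAcyclic_starGraph)

def edgeLength (S : Finset Pt) : Sym2 S → ℝ :=
  Sym2.lift ⟨fun a b => dist (a : Pt) b, fun a b => dist_comm (a : Pt) b⟩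

lemma edgeLength_nonneg (S : Finset Pt) (e : Sym2 S) : 0 ≤ edgeLength S e := by
  induction e using Sym2.ind with | _ a b => exact dist_nonneg (x := (a : Pt))

lemma treeCost_nonneg (S : Finset Pt) (T : SimpleGraph S) : 0 ≤ treeCost S T :=
  sum_nonneg fun e _ => edgeLength_nonneg S e

lemma filter_mem_edgeSet_starGraph (S : Finset Pt) (r : S) :
    univ.filter (· ∈ (starGraph r).edgeSet) = (univ.erase r).image (s(r, ·)) := by
  ext e
  induction e using Sym2.ind with
  | _ a b =>
    simp only [mem_filter, mem_univ, true_and, mem_image, mem_erase, and_true,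
      SimpleGraph.mem_edgeSet, starGraph_adj]
    constructor
    · rintro ⟨hab, rfl | rfl⟩
      exacts [⟨b, Ne.symm hab, rfl⟩, ⟨a, hab, Sym2.eq_swap⟩]
    · rintro ⟨v, hv, hve⟩
      rcases Sym2.eq_iff.mp hve with ⟨rfl, rfl⟩ | ⟨rfl, rfl⟩
      exacts [⟨Ne.symm hv, Or.inl rfl⟩, ⟨hv, Or.inr rfl⟩]

lemma treeCost_starGraph (S : Finset Pt) (r : S) :
    treeCost S (starGraph r) = ∑ v ∈ S, dist (r : Pt) v := by
  rw [treeCost, filter_congr_decidable, filter_mem_edgeSet_starGraph,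
    sum_image fun _ _ _ _ => Sym2.congr_right.mp, sum_erase _ (by simp), ← sum_coe_sort S]
  rfl

lemma mst_le_sum_dist {S : Finset Pt} {r : Pt} (hr : r ∈ S) : mst S ≤ ∑ v ∈ S, dist r v :=
  csInf_le ⟨0, by rintro _ ⟨T, -, -, rfl⟩; exact treeCost_nonneg S T⟩
    ⟨starGraph ⟨r, hr⟩, connected_starGraph _, isAcyclic_starGraph _,
      (treeCost_starGraph S ⟨r, hr⟩).symm⟩

lemma dist_le_sum_edgeLength {S : Finset Pt} {T : SimpleGraph S} {a b : S} (w : T.Walk a b) :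
    dist (a : Pt) b ≤ (w.edges.map (edgeLength S)).sum := by
  induction w with
  | nil => simp
  | cons _ _ ih =>
    rw [SimpleGraph.Walk.edges_cons, List.map_cons, List.sum_cons]
    exact (dist_triangle _ _ _).trans (add_le_add le_rfl ih)

lemma dist_le_treeCost {S : Finset Pt} {T : SimpleGraph S} (hT : T.Connected) (a b : S) :
    dist (a : Pt) b ≤ treeCost S T := by
  obtain ⟨w, hw⟩ := (hT a b).some.toPath
  calc dist (a : Pt) b ≤ (w.edges.map (edgeLength S)).sum := dist_le_sum_edgeLength w
    _ = ∑ e ∈ w.edges.toFinset, edgeLength S e := (List.sum_toFinset _ hw.edges_nodup).symm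
    _ ≤ treeCost S T := by
      refine sum_le_sum_of_subset_of_nonneg (fun e he => ?_) fun e _ _ => edgeLength_nonneg S e
      simpa using w.edges_subset_edgeSet (List.mem_toFinset.mp he)

lemma dist_le_mst {S : Finset Pt} {p q : Pt} (hp : p ∈ S) (hq : q ∈ S) : dist p q ≤ mst S :=
  le_csInf ⟨_, starGraph ⟨p, hp⟩, connected_starGraph _, isAcyclic_starGraph _, rfl⟩
    fun _ ⟨_, hT, _, hL⟩ => hL ▸ dist_le_treeCost hT ⟨p, hp⟩ ⟨q, hq⟩

lemma mst_le_sum_ite_of_subset {S T : Finset Pt} {p : Pt} {D d : ℝ}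
    (hfar : ∀ u ∈ S, dist u p ≤ D)
    (hnear : ∀ u ∈ S, ∀ v ∈ S, u ≠ p → v ≠ p → dist u v ≤ d)
    (hTS : T ⊆ S) (hT : T.Nonempty) :
    mst T ≤ ∑ v ∈ T, if v = p then D else d := by
  by_cases hr : ∃ r ∈ T, r ≠ p
  · obtain ⟨r, hrT, hrp⟩ := hr
    refine (mst_le_sum_dist hrT).trans (sum_le_sum fun v hv => ?_)
    split_ifs with hvp
    · exact hvp ▸ hfar r (hTS hrT)
    · exact hnear r (hTS hrT) v (hTS hv) hrp hvp
  · push Not at hr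
    obtain ⟨q, hq⟩ := hT
    have hpT : p ∈ T := hr q hq ▸ hq
    refine (mst_le_sum_dist hpT).trans (sum_le_sum fun v hv => ?_)
    rw [hr v hv, dist_self, if_pos rfl]
    simpa using hfar p (hTS hpT)

lemma mst_add_mst_le {S B C : Finset Pt} {p : Pt} {D d : ℝ}
    (hfar : ∀ u ∈ S, dist u p ≤ D)
    (hnear : ∀ u ∈ S, ∀ v ∈ S, u ≠ p → v ≠ p → dist u v ≤ d)
    (hp : p ∈ S) (hB : B.Nonempty) (hC : C.Nonempty) (hBC : Disjoint B C) (hS : B ∪ C = S) :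
    mst B + mst C ≤ D + (#S - 1) * d := by
  have hBS : B ⊆ S := hS ▸ subset_union_left
  have hCS : C ⊆ S := hS ▸ subset_union_right
  calc mst B + mst C
      ≤ (∑ v ∈ B, if v = p then D else d) + ∑ v ∈ C, if v = p then D else d :=
        add_le_add (mst_le_sum_ite_of_subset hfar hnear hBS hB)
          (mst_le_sum_ite_of_subset hfar hnear hCS hC)
    _ = ∑ v ∈ S, if v = p then D else d := by rw [← sum_union hBC, hS]
    _ = D + (#S - 1) * d := by
        rw [← add_sum_erase _ _ hp, if_pos rfl,
          sum_congr rfl fun v hv => if_neg (ne_of_mem_erase hv), sum_const, card_erase_of_mem hp,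
          nsmul_eq_mul, Nat.cast_pred (card_pos.mpr ⟨p, hp⟩)]

def farPointConfig (δ : ℝ) : Finset Pt :=
  ({0, 1, 1 + δ, 1 + 2 * δ} : Finset ℝ).image (EuclideanSpace.single 0)

lemma isometry_single : Isometry (EuclideanSpace.single 0 : ℝ → Pt) :=
  Isometry.of_dist_eq fun a b => PiLp.dist_single_same 2 (fun _ => ℝ) 0 a b

lemma card_farPointConfig {δ : ℝ} (hδ : 0 < δ) : #(farPointConfig δ) = 4 := by
  rw [farPointConfig, card_image_of_injective _ isometry_single.injective,
    card_insert_of_notMem, card_insert_of_notMem, card_pair] <;> grind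

lemma mem_Icc_of_mem_farPointConfig {δ x : ℝ} (hδ : 0 ≤ δ)
    (hx : x ∈ ({0, 1, 1 + δ, 1 + 2 * δ} : Finset ℝ)) :
    x ∈ Set.Icc 0 (1 + 2 * δ) ∧ (x ≠ 0 → x ∈ Set.Icc 1 (1 + 2 * δ)) := by
  simp only [mem_insert, mem_singleton] at hx
  rcases hx with rfl | rfl | rfl | rfl <;> grind

lemma dist_single_zero_le_of_mem_farPointConfig {δ : ℝ} (hδ : 0 ≤ δ) :
    ∀ u ∈ farPointConfig δ, dist u (EuclideanSpace.single 0 0) ≤ 1 + 2 * δ := by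
  simp only [farPointConfig, forall_mem_image, isometry_single.dist_eq]
  intro x hx
  simpa using Real.dist_le_of_mem_Icc (mem_Icc_of_mem_farPointConfig hδ hx).1
    (Set.left_mem_Icc.mpr (by linarith))

lemma dist_le_of_mem_farPointConfig {δ : ℝ} (hδ : 0 ≤ δ) :
    ∀ u ∈ farPointConfig δ, ∀ v ∈ farPointConfig δ,
      u ≠ EuclideanSpace.single 0 0 → v ≠ EuclideanSpace.single 0 0 → dist u v ≤ 2 * δ := by
  simp only [farPointConfig, forall_mem_image, isometry_single.dist_eq, ne_eq,
    isometry_single.injective.eq_iff]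
  intro x hx y hy hx0 hy0
  simpa using Real.dist_le_of_mem_Icc ((mem_Icc_of_mem_farPointConfig hδ hx).2 hx0)
    ((mem_Icc_of_mem_farPointConfig hδ hy).2 hy0)

/-- For every `ε > 0` there is a finite set `A ⊆ ℝ²` with at least
4 points such that every bipartition `A = B ⊔ C` into nonempty parts satisfies
`MST(B) + MST(C) ≤ (1 + ε)·MST(A)`: the infimum over finite sets of the maximum
MST-ratio over bipartitions is 1. -/
theorem inf_max_mst_ratio_eq_one :
    ∀ ε : ℝ, 0 < ε → ∃ A : Finset Pt, 4 ≤ A.card ∧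
      ∀ B C : Finset Pt, B.Nonempty → C.Nonempty → Disjoint B C → B ∪ C = A →
        mst B + mst C ≤ (1 + ε) * mst A := by
  intro ε hε
  set δ := ε / 8 with hδε
  have hδ : 0 < δ := by positivity
  have hcard := card_farPointConfig hδ
  have h0 : EuclideanSpace.single 0 0 ∈ farPointConfig δ := by simp [farPointConfig]
  have hmst : 1 ≤ mst (farPointConfig δ) := by
    have h1 : EuclideanSpace.single 0 1 ∈ farPointConfig δ := by simp [farPointConfig]
    simpa [isometry_single.dist_eq] using dist_le_mst h0 h1
  refine ⟨farPointConfig δ, hcard.ge, fun B C hB hC hBC hS => ?_⟩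
  calc mst B + mst C
      ≤ 1 + 2 * δ + (#(farPointConfig δ) - 1) * (2 * δ) :=
        mst_add_mst_le (dist_single_zero_le_of_mem_farPointConfig hδ.le)
          (dist_le_of_mem_farPointConfig hδ.le) h0 hB hC hBC hS
    _ = (1 + ε) * 1 := by rw [hcard, hδε]; ring
    _ ≤ (1 + ε) * mst (farPointConfig δ) := by gcongr
end
end

section
/- Let A ⊆ ℝ² be finite and r ≥ 0, and let A_r be the union of closed disks of radius r centered at points of A. Two points a, b ∈ A lie in the same connected component of A_r if and only if there is a sequence a = x_0, x_1, …, x_k = b of points of A with ‖x_i − x_{i+1}‖ ≤ 2r for all i. Consequently the number of connected components of A_r equals the number of connected components of the graph on A with edges of length at most 2r. -/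
open scoped Classical

noncomputable section

/-!
Closed disks are convex, so two disks whose centres are at distance at most `2r` meet (in the
midpoint of the centres) and their union is connected: centres joined by a chain therefore lie in
one component of `A_r`. Conversely, fix `a ∈ A` and split `A_r` into the union of the disks around
the centres reachable from `a` and the union of the others. Both are finite unions of closed disks,
hence closed, and they are disjoint because overlapping disks have centres at distance at most `2r`;
so the component of `a` lies in the first. Since every point of `A_r` lies in the component of the
centre of a disk containing it, `a ↦ component of a` induces a bijection from the components of the
graph onto those of `A_r`.
-/

open Metric Set

theorem Relation.reflTransGen_iff_exists_fin {α : Type*} {R : α → α → Prop} {a b : α} :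
    ReflTransGen R a b ↔ ∃ (k : ℕ) (x : Fin (k + 1) → α),
      x 0 = a ∧ x (Fin.last k) = b ∧ ∀ i : Fin k, R (x i.castSucc) (x i.succ) := by
  constructor
  · intro h
    induction h with
    | refl => exact ⟨0, fun _ => a, rfl, rfl, fun i => i.elim0⟩
    | @tail c d _ hcd ih =>
      obtain ⟨k, x, hx0, hxk, hx⟩ := ih
      refine ⟨k + 1, Fin.snoc x d, by simpa using hx0, by simp, fun i => ?_⟩
      induction i using Fin.lastCases with
      | last => simpa [hxk] using hcd
      | cast j => rw [Fin.succ_castSucc, Fin.snoc_castSucc, Fin.snoc_castSucc]; exact hx j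
  · rintro ⟨k, x, rfl, rfl, hx⟩
    suffices ∀ i : Fin (k + 1), ReflTransGen R (x 0) (x i) from this _
    intro i
    induction i using Fin.induction with
    | zero => rfl
    | succ i ih => exact ih.tail (hx i)

theorem SimpleGraph.reachable_fromRel_iff {V : Type*} {r : V → V → Prop} (sym : Std.Symm r)
    {u v : V} : (fromRel r).Reachable u v ↔ Relation.ReflTransGen r u v := by
  have : Relation.ReflGen (fromRel r).Adj = Relation.ReflGen r := by
    ext x y
    rcases eq_or_ne x y with rfl | hxy
    · exact iff_of_true .refl .refl
    · simp only [Relation.reflGen_iff, fromRel_adj, hxy, hxy.symm, ne_eq, not_false_eq_true,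
        true_and, false_or]
      exact ⟨(·.elim id (sym.symm _ _)), .inl⟩
  rw [reachable_iff_reflTransGen, ← Relation.transGen_reflGen, this, Relation.transGen_reflGen]

theorem IsPreconnected.subset_left_of_subset_union_of_isClosed {α : Type*} [TopologicalSpace α]
    {s u v : Set α} (hu : IsClosed u) (hv : IsClosed v) (huv : Disjoint u v) (hsuv : s ⊆ u ∪ v)
    (hsu : (s ∩ u).Nonempty) (hs : IsPreconnected s) : s ⊆ u :=
  Disjoint.subset_left_of_subset_union hsuv <| by
    by_contra hsv
    rw [not_disjoint_iff_nonempty_inter] at hsv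
    obtain ⟨x, _, hx⟩ := isPreconnected_closed_iff.mp hs u v hu hv hsuv hsu hsv
    exact Set.disjoint_iff.1 huv hx

theorem ConnectedComponents.coe_eq_coe_iff_mem_connectedComponentIn {α : Type*}
    [TopologicalSpace α] {F : Set α} {x y : F} :
    (x : ConnectedComponents F) = y ↔ (x : α) ∈ connectedComponentIn F y := by
  rw [coe_eq_coe', connectedComponentIn_eq_image y.2, Subtype.coe_injective.mem_set_image]

theorem closedBall_inter_closedBall_nonempty_of_dist_le_two_mul {E : Type*}
    [NormedAddCommGroup E] [NormedSpace ℝ E] {a b : E} {r : ℝ} (h : dist a b ≤ 2 * r) :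
    (closedBall a r ∩ closedBall b r).Nonempty := by
  refine ⟨midpoint ℝ a b, ?_, ?_⟩
  · rw [mem_closedBall, dist_comm, dist_left_midpoint (𝕜 := ℝ)]
    simp only [Real.norm_ofNat]; linarith
  · rw [mem_closedBall, dist_comm, dist_right_midpoint (𝕜 := ℝ)]
    simp only [Real.norm_ofNat]; linarith

section DiskUnion

variable {E : Type*}

def diskGraph [PseudoMetricSpace E] (A : Finset E) (r : ℝ) : SimpleGraph A :=
  SimpleGraph.fromRel fun a b : A => dist (a : E) b ≤ 2 * r

section PseudoMetric

variable [PseudoMetricSpace E] {A : Finset E} {r : ℝ}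

theorem closedBall_subset_biUnion {c : E} (hc : c ∈ A) :
    closedBall c r ⊆ ⋃ c ∈ A, closedBall c r :=
  Finset.subset_set_biUnion_of_mem (f := fun c => closedBall c r) hc

theorem diskGraph_reachable_iff {a b : A} :
    (diskGraph A r).Reachable a b ↔
      Relation.ReflTransGen (fun x y : A => dist (x : E) y ≤ 2 * r) a b :=
  SimpleGraph.reachable_fromRel_iff ⟨fun x y h => by rwa [dist_comm]⟩

theorem diskGraph_reachable_of_dist_le {a b : A} (h : dist (a : E) b ≤ 2 * r) :
    (diskGraph A r).Reachable a b :=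
  diskGraph_reachable_iff.2 (.single h)

theorem diskGraph_reachable_of_mem_connectedComponentIn (hr : 0 ≤ r) {a b : A}
    (h : (b : E) ∈ connectedComponentIn (⋃ c ∈ A, closedBall c r) a) :
    (diskGraph A r).Reachable a b := by
  set S : Set A := {c | (diskGraph A r).Reachable a c}
  set U := ⋃ c ∈ S, closedBall (c : E) r
  set V := ⋃ c ∈ Sᶜ, closedBall (c : E) r
  have hU : IsClosed U := S.toFinite.isClosed_biUnion fun _ _ => isClosed_closedBall
  have hV : IsClosed V := Sᶜ.toFinite.isClosed_biUnion fun _ _ => isClosed_closedBall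
  have hUV : Disjoint U V := by
    refine Set.disjoint_left.2 fun x hxU hxV => ?_
    obtain ⟨c, hc, hxc⟩ := mem_iUnion₂.1 hxU
    obtain ⟨d, hd, hxd⟩ := mem_iUnion₂.1 hxV
    have hcd : dist (c : E) d ≤ 2 * r := by
      linarith [dist_le_add_of_nonempty_closedBall_inter_closedBall ⟨x, hxc, hxd⟩]
    exact hd (SimpleGraph.Reachable.trans hc (diskGraph_reachable_of_dist_le hcd))
  have hcover : connectedComponentIn (⋃ c ∈ A, closedBall c r) a ⊆ U ∪ V := by
    refine (connectedComponentIn_subset _ _).trans fun x hx => ?_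
    obtain ⟨c, hc, hxc⟩ := mem_iUnion₂.1 hx
    by_cases hcS : (⟨c, hc⟩ : A) ∈ S
    · exact .inl (mem_biUnion hcS hxc)
    · exact .inr (mem_biUnion hcS hxc)
  have ha : (a : E) ∈ connectedComponentIn (⋃ c ∈ A, closedBall c r) a ∩ U :=
    ⟨mem_connectedComponentIn (mem_biUnion a.2 (mem_closedBall_self hr)),
      mem_biUnion (show a ∈ S from .refl _) (mem_closedBall_self hr)⟩
  obtain ⟨c, hc, hbc⟩ := mem_iUnion₂.1 <|
    isPreconnected_connectedComponentIn.subset_left_of_subset_union_of_isClosed hU hV hUV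
      hcover ⟨a, ha⟩ h
  have hcb : dist (c : E) b ≤ 2 * r := by
    linarith [mem_closedBall'.1 hbc, dist_nonneg (x := (c : E)) (y := b)]
  exact SimpleGraph.Reachable.trans hc (diskGraph_reachable_of_dist_le hcb)

end PseudoMetric

variable [NormedAddCommGroup E] [NormedSpace ℝ E] {A : Finset E} {r : ℝ}

theorem mem_connectedComponentIn_of_diskGraph_reachable (hr : 0 ≤ r) {a b : A}
    (h : (diskGraph A r).Reachable a b) :
    (b : E) ∈ connectedComponentIn (⋃ c ∈ A, closedBall c r) a := by
  rw [diskGraph_reachable_iff] at h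
  induction h with
  | refl => exact mem_connectedComponentIn (mem_biUnion a.2 (mem_closedBall_self hr))
  | @tail c d _ hcd ih =>
    rw [connectedComponentIn_eq ih]
    have hpre : IsPreconnected (closedBall (c : E) r ∪ closedBall d r) :=
      (convex_closedBall _ _).isPreconnected.union'
        (closedBall_inter_closedBall_nonempty_of_dist_le_two_mul hcd)
        (convex_closedBall _ _).isPreconnected
    have hsub : closedBall (c : E) r ∪ closedBall d r ⊆ ⋃ c ∈ A, closedBall c r :=
      union_subset (closedBall_subset_biUnion c.2) (closedBall_subset_biUnion d.2)
    exact hpre.subset_connectedComponentIn (.inl (mem_closedBall_self hr)) hsub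
      (.inr (mem_closedBall_self hr))

theorem mem_connectedComponentIn_biUnion_closedBall_iff (hr : 0 ≤ r) {a b : A} :
    (b : E) ∈ connectedComponentIn (⋃ c ∈ A, closedBall c r) a ↔ (diskGraph A r).Reachable a b :=
  ⟨diskGraph_reachable_of_mem_connectedComponentIn hr,
    mem_connectedComponentIn_of_diskGraph_reachable hr⟩

theorem nat_card_connectedComponents_biUnion_closedBall (hr : 0 ≤ r) :
    Nat.card (ConnectedComponents (⋃ c ∈ A, closedBall c r)) =
      Nat.card (diskGraph A r).ConnectedComponent := by
  let f : A → ConnectedComponents (⋃ c ∈ A, closedBall c r) :=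
    fun a => ConnectedComponents.mk ⟨a, mem_biUnion a.2 (mem_closedBall_self hr)⟩
  have hf : Function.Surjective f := by
    refine ConnectedComponents.surjective_coe.forall.2 fun ⟨x, hx⟩ => ?_
    obtain ⟨c, hc, hxc⟩ := mem_iUnion₂.1 hx
    refine ⟨⟨c, hc⟩, (ConnectedComponents.coe_eq_coe_iff_mem_connectedComponentIn.2 ?_).symm⟩
    exact (convex_closedBall c r).isPreconnected.subset_connectedComponentIn
      (mem_closedBall_self hr) (closedBall_subset_biUnion hc) hxc
  have hker (a b : A) : (diskGraph A r).Reachable a b ↔ f a = f b := by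
    rw [eq_comm, ConnectedComponents.coe_eq_coe_iff_mem_connectedComponentIn]
    exact (mem_connectedComponentIn_biUnion_closedBall_iff hr).symm
  exact Nat.card_congr
    ((Quot.congrRight hker).trans (Setoid.quotientKerEquivOfSurjective f hf)).symm

end DiskUnion

/-- Let `A_r` be the union of closed disks of radius `r ≥ 0`
around the points of a finite set `A ⊆ ℝ²`.  Two points `a, b ∈ A` lie in the same
connected component of `A_r` iff they are joined by a chain of points of `A` with
consecutive distances at most `2r`; consequently the number of connected components
of `A_r` equals the number of connected components of the graph on `A` whose edges
are the pairs at distance at most `2r`. -/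
theorem union_of_disks_components (A : Finset Pt) (r : ℝ) (hr : 0 ≤ r) :
    ∀ Ar : Set Pt, Ar = (⋃ a ∈ A, Metric.closedBall a r) →
      (∀ a ∈ A, ∀ b ∈ A,
        ((b : Pt) ∈ connectedComponentIn Ar a ↔
          ∃ (k : ℕ) (x : Fin (k + 1) → Pt), (∀ i, x i ∈ A) ∧
            x 0 = a ∧ x (Fin.last k) = b ∧
            ∀ i : Fin k, dist (x i.castSucc) (x i.succ) ≤ 2 * r)) ∧
      Nat.card (ConnectedComponents Ar) =
        Nat.card (SimpleGraph.fromRel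
          (fun a b : A => dist (a : Pt) (b : Pt) ≤ 2 * r)).ConnectedComponent := by
  rintro Ar rfl
  refine ⟨fun a ha b hb => ?_, nat_card_connectedComponents_biUnion_closedBall hr⟩
  rw [mem_connectedComponentIn_biUnion_closedBall_iff hr (a := ⟨a, ha⟩) (b := ⟨b, hb⟩),
    diskGraph_reachable_iff, Relation.reflTransGen_iff_exists_fin]
  constructor
  · rintro ⟨k, y, hy0, hyk, hy⟩
    exact ⟨k, fun i => y i, fun i => (y i).2, congrArg Subtype.val hy0, congrArg Subtype.val hyk,
      hy⟩
  · rintro ⟨k, x, hx, hx0, hxk, hxd⟩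
    exact ⟨k, fun i => ⟨x i, hx i⟩, Subtype.ext hx0, Subtype.ext hxk, hxd⟩
end
end
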